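/- Let F be a standard Borel space and let m ∈ ℕ. Then the parallel extension function Ext : 𝔻 × (Fin m → F) → 𝔻 defined by Ext(S, v) = S ∪ {v(0), …, v(m−1)} is measurable, where Fin m → F carries the product (pi) σ-algebra of the Borel σ-algebra of F. -/

import Mathlib

open MeasureTheory

/-- The canonical embedding of a database instance (a finite set of facts)
into the space of measures: `S ↦ ∑_{x ∈ S} δ_x`. -/
noncomputable def iota {F : Type*} [MeasurableSpace F] (S : Finset F) : Measure F :=
  ∑ x ∈ S, Measure.dirac x

/-- The instance space `𝔻`: `Finset F` equipped with the σ-algebra comapped along `ι`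
from the canonical σ-algebra on `Measure F`. -/
noncomputable instance instanceSpace (F : Type*) [MeasurableSpace F] : MeasurableSpace (Finset F) :=
  MeasurableSpace.comap iota inferInstance

/-!
`Ext` inserts the facts `v 0, …, v (m-1)` one at a time, so it suffices that a single insertion
`(S, x) ↦ insert x S` is measurable. Since `ι (insert x S) = ι S + [x ∉ S] δ_x`, this reduces to
measurability of the membership relation `{(S, x) | x ∈ S}`. Membership is detected by
`ι S {x} ≠ 0`, and `(S, x) ↦ ι S {x}` is the measure of a section of the diagonal, which is
measurable in a standard Borel space, under the finite kernel `(S, x) ↦ ι S`.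
-/

open ProbabilityTheory

section Iota

variable {F : Type*} [MeasurableSpace F]

lemma measurable_iota : Measurable (iota : Finset F → Measure F) :=
  comap_measurable iota

instance (S : Finset F) : IsFiniteMeasure (iota S) := by
  unfold iota; infer_instance

lemma iota_singleton_eq_zero_iff [MeasurableSingletonClass F] (S : Finset F) (x : F) :
    iota S {x} = 0 ↔ x ∉ S := by
  simp [iota, Measure.finsetSum_apply]

lemma iota_insert [DecidableEq F] (S : Finset F) (x : F) :
    iota (insert x S) = iota S + if x ∈ S then 0 else Measure.dirac x := by
  by_cases hx : x ∈ S
  · simp [hx]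
  · simp [iota, hx, Finset.sum_insert, add_comm]

lemma measurable_iota_fst_apply_singleton_snd [MeasurableEq F] :
    Measurable fun p : Finset F × F => iota p.1 {p.2} :=
  let κ : Kernel (Finset F × F) F := ⟨fun p => iota p.1, measurable_iota.comp measurable_fst⟩
  Kernel.measurable_kernel_prodMk_left_of_finite (κ := κ)
    (measurableSet_eq_fun measurable_snd (measurable_snd.comp measurable_fst))
    fun p => inferInstanceAs (IsFiniteMeasure (iota p.1))

lemma measurableSet_snd_mem_fst [MeasurableEq F] :
    MeasurableSet {p : Finset F × F | p.2 ∈ p.1} := by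
  have hmem : {p : Finset F × F | p.2 ∈ p.1} = (fun p => iota p.1 {p.2}) ⁻¹' {0}ᶜ := by
    ext p
    simp [iota_singleton_eq_zero_iff]
  exact hmem ▸ measurable_iota_fst_apply_singleton_snd (measurableSet_singleton 0).compl

lemma Measurable.finset_insert [DecidableEq F] [MeasurableEq F] {α : Type*} [MeasurableSpace α]
    {f : α → F} {g : α → Finset F} (hf : Measurable f) (hg : Measurable g) :
    Measurable fun a => insert (f a) (g a) := by
  refine measurable_comap_iff.2 ?_
  simp only [Function.comp_def, iota_insert]
  have hmem : MeasurableSet {a | f a ∈ g a} :=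
    measurableSet_snd_mem_fst.preimage (hg.prodMk hf)
  exact (measurable_iota.comp hg).add
    (Measurable.ite hmem measurable_const (Measure.measurable_dirac.comp hf))

end Iota

lemma Finset.union_image_univ_fin_succ {α : Type*} [DecidableEq α] {m : ℕ} (S : Finset α)
    (v : Fin (m + 1) → α) :
    S ∪ image v univ = insert (v 0) (S ∪ image (Fin.tail v) univ) := by
  ext x
  simp only [mem_union, mem_image, mem_univ, true_and, mem_insert, Fin.exists_fin_succ,
    Fin.tail]
  tauto

/-- The parallel extension function `Ext (S, v) = S ∪ {v 0, …, v (m-1)}` is measurable,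
where `Fin m → F` carries the product (pi) σ-algebra of the Borel σ-algebra of the
standard Borel space `F`. -/
theorem measurable_Ext (F : Type*) [MeasurableSpace F] [StandardBorelSpace F]
    [DecidableEq F] (m : ℕ) :
    Measurable (fun p : Finset F × (Fin m → F) =>
      p.1 ∪ Finset.image p.2 Finset.univ) := by
  induction m with
  | zero => simpa using measurable_fst
  | succ m ih =>
    simp only [Finset.union_image_univ_fin_succ]
    have htail : Measurable fun v : Fin (m + 1) → F => Fin.tail v :=
      measurable_pi_lambda _ fun i => measurable_pi_apply i.succ
    have hrest : Measurable fun p : Finset F × (Fin (m + 1) → F) =>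
        p.1 ∪ Finset.image (Fin.tail p.2) Finset.univ :=
      ih.comp (measurable_fst.prodMk (htail.comp measurable_snd))
    exact ((measurable_pi_apply 0).comp measurable_snd).finset_insert hrest
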